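/- Let f: [0,1]^n → ℝ be defined by f(α) = E_σ[sup_{a∈A} Σ_{i=1}^n σ_i α_i a_i] for a nonempty finite set A ⊂ ℝ^n and Rademacher random variables σ. Then f is convex and attains its maximum over [0,1]^n at the all-ones vector, i.e., for all α ∈ [0,1]^n, f(α) ≤ f(1,…,1). -/

import Mathlib

open MeasureTheory

/-- The uniform measure on sign vectors `Fin n → Bool` (i.i.d. Rademacher signs). -/
noncomputable def rademacherMeasure (n : ℕ) : Measure (Fin n → Bool) :=
  (PMF.uniformOfFintype (Fin n → Bool)).toMeasure

/-- The sign `±1` associated to a Boolean. -/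
def sgn (b : Bool) : ℝ := if b then 1 else -1

/-- `f(α) = E_σ[sup_{a∈A} Σ_i σ_i α_i a_i]`. -/
noncomputable def fRad {n : ℕ} (A : Finset (Fin n → ℝ)) (α : Fin n → ℝ) : ℝ :=
  ∫ σ : Fin n → Bool,
    sSup ((fun a : Fin n → ℝ => ∑ i, sgn (σ i) * α i * a i) '' A) ∂(rademacherMeasure n)

/-! For every sign pattern `σ` the inner supremum is a maximum of linear functions of `α`, so it
is convex on all of `ℝⁿ`, and so is its average `f`. Substituting `σ ↦ σ ⊙ ε` shows that `f` is
invariant under coordinatewise sign changes `α ↦ ε ⊙ α`, so it takes the value `f(1,…,1)` at every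
vertex of `[-1,1]ⁿ`. By the maximum principle for convex functions, `f ≤ f(1,…,1)` on
`[-1,1]ⁿ ⊇ [0,1]ⁿ`. -/

open Finset Set

section Convex

variable {𝕜 E β ι : Type*} [Semiring 𝕜] [PartialOrder 𝕜] [AddCommMonoid E] [SMul 𝕜 E]
  [AddCommMonoid β] [LinearOrder β] [IsOrderedAddMonoid β] [Module 𝕜 β] {s : Set E}

theorem ConvexOn.finset_sum (hs : Convex 𝕜 s) {t : Finset ι} {f : ι → E → β}
    (hf : ∀ i ∈ t, ConvexOn 𝕜 s (f i)) : ConvexOn 𝕜 s fun x ↦ ∑ i ∈ t, f i x := by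
  simpa only [← Finset.sum_apply] using
    Finset.sum_induction f (ConvexOn 𝕜 s) (fun _ _ hg hh ↦ hg.add hh) (convexOn_const 0 hs) hf

theorem ConvexOn.finset_sup' [PosSMulStrictMono 𝕜 β] {t : Finset ι} (ht : t.Nonempty)
    {f : ι → E → β} (hf : ∀ i ∈ t, ConvexOn 𝕜 s (f i)) :
    ConvexOn 𝕜 s fun x ↦ t.sup' ht fun i ↦ f i x := by
  simpa only [← Finset.sup'_apply] using Finset.sup'_induction ht f (fun _ hg _ hh ↦ hg.sup hh) hf

end Convex

theorem sgn_mul_sgn (b c : Bool) : sgn b * sgn c = sgn (b == c) := by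
  cases b <;> cases c <;> norm_num [sgn]

variable {n : ℕ} (A : Finset (Fin n → ℝ))

noncomputable def rademacherSup (σ : Fin n → Bool) (α : Fin n → ℝ) : ℝ :=
  sSup ((fun a : Fin n → ℝ ↦ ∑ i, sgn (σ i) * α i * a i) '' A)

def signedPairing (σ : Fin n → Bool) (a : Fin n → ℝ) : (Fin n → ℝ) →ₗ[ℝ] ℝ :=
  ∑ i, (sgn (σ i) * a i) • LinearMap.proj i

theorem signedPairing_apply (σ : Fin n → Bool) (a α : Fin n → ℝ) :
    signedPairing σ a α = ∑ i, sgn (σ i) * α i * a i := by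
  simp only [signedPairing, LinearMap.coe_sum, LinearMap.coe_smul, LinearMap.coe_proj,
    Finset.sum_apply, Pi.smul_apply, Function.eval, smul_eq_mul]
  exact Finset.sum_congr rfl fun i _ ↦ by ring

theorem rademacherSup_eq_sup' (hA : A.Nonempty) (σ : Fin n → Bool) (α : Fin n → ℝ) :
    rademacherSup A σ α = A.sup' hA fun a ↦ signedPairing σ a α := by
  simp only [rademacherSup, signedPairing_apply, Finset.sup'_eq_csSup_image]

theorem convexOn_rademacherSup (hA : A.Nonempty) (σ : Fin n → Bool) :
    ConvexOn ℝ univ (rademacherSup A σ) := by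
  rw [funext (rademacherSup_eq_sup' A hA σ)]
  exact ConvexOn.finset_sup' hA fun a _ ↦ (signedPairing σ a).convexOn convex_univ

theorem rademacherSup_sgn_mul (σ τ : Fin n → Bool) (α : Fin n → ℝ) :
    rademacherSup A σ (fun i ↦ sgn (τ i) * α i) = rademacherSup A (fun i ↦ σ i == τ i) α := by
  simp only [rademacherSup, ← mul_assoc, sgn_mul_sgn]

theorem fRad_eq_sum (α : Fin n → ℝ) :
    fRad A α = ((2 : ℝ) ^ n)⁻¹ * ∑ σ, rademacherSup A σ α := by
  simp [fRad, rademacherMeasure, PMF.integral_eq_sum, rademacherSup, Finset.mul_sum]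

theorem convexOn_fRad (hA : A.Nonempty) : ConvexOn ℝ univ (fRad A) := by
  rw [funext (fRad_eq_sum A)]
  exact (ConvexOn.finset_sum convex_univ fun σ _ ↦ convexOn_rademacherSup A hA σ).smul
    (by positivity)

theorem fRad_sgn_mul (τ : Fin n → Bool) (α : Fin n → ℝ) :
    fRad A (fun i ↦ sgn (τ i) * α i) = fRad A α := by
  have hinv : Function.Involutive fun σ : Fin n → Bool ↦ fun i ↦ σ i == τ i :=
    fun σ ↦ funext fun i ↦ by simp
  simp only [fRad_eq_sum, rademacherSup_sgn_mul]
  congr 1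
  exact Fintype.sum_bijective _ hinv.bijective _ _ fun _ ↦ rfl

theorem fRad_eq_fRad_one_of_mem_pi {ε : Fin n → ℝ} (hε : ε ∈ univ.pi fun _ ↦ range sgn) :
    fRad A ε = fRad A 1 := by
  choose τ hτ using hε
  simpa only [hτ, Pi.one_apply, mul_one] using fRad_sgn_mul A (fun i ↦ τ i (mem_univ i)) 1

theorem Icc_zero_one_subset_convexHull_pi_range_sgn :
    Icc (0 : Fin n → ℝ) 1 ⊆ convexHull ℝ (univ.pi fun _ ↦ range sgn) := by
  have hsgn : Icc (-1 : ℝ) 1 ⊆ convexHull ℝ (range sgn) := by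
    rw [← segment_eq_Icc (by norm_num), ← convexHull_pair]
    exact convexHull_mono (pair_subset ⟨false, rfl⟩ ⟨true, rfl⟩)
  rw [convexHull_pi]
  exact fun α hα i _ ↦ hsgn ⟨by linarith [show (0 : ℝ) ≤ α i from hα.1 i], hα.2 i⟩

/-- `f` is convex on `[0,1]^n` and attains its maximum there at the all-ones vector. -/
theorem fRad_convex_max {n : ℕ} (A : Finset (Fin n → ℝ)) (hA : A.Nonempty) :
    ConvexOn ℝ (Set.Icc (0 : Fin n → ℝ) 1) (fRad A) ∧
    ∀ α ∈ Set.Icc (0 : Fin n → ℝ) 1, fRad A α ≤ fRad A 1 := by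
  have hconv := convexOn_fRad A hA
  refine ⟨hconv.subset (subset_univ _) (convex_Icc _ _), fun α hα ↦ ?_⟩
  obtain ⟨ε, hε, hαε⟩ := hconv.exists_ge_of_mem_convexHull (subset_univ _)
    (Icc_zero_one_subset_convexHull_pi_range_sgn hα)
  exact hαε.trans (fRad_eq_fRad_one_of_mem_pi A hε).le
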